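/- arXiv:2605.09082 — 2 statements merged into one kernel-verified Lean document; each statement's English description precedes it below -/
import Mathlib

section
/- Let t be a labeled rooted tree over ℤ satisfying the local degree constraint. If moreover the global degree constraint rootLabel t − leafSum t = 2 − numLeaves t holds, then numNodes t = 1, i.e. t consists of a single node all of whose children are leaves. -/
/-- Labeled rooted trees over a type `α`: a tree is either a leaf carrying a
label (an external input edge), or a node carrying a label (the output edge of
a holomorphic disk component) together with a finite list of subtrees. -/
inductive LTree (α : Type*) : Type _ where
  | leaf : α → LTree α
  | node : α → List (LTree α) → LTree α

namespace LTree

variable {α : Type*}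

/-- The label carried by the root constructor. -/
def rootLabel : LTree α → α
  | leaf a => a
  | node a _ => a

/-- The sum of the labels of all leaf constructors occurring in the tree. -/
def leafSum [AddCommMonoid α] : LTree α → α
  | leaf a => a
  | node _ cs => (cs.attach.map (fun c => leafSum c.1)).sum
decreasing_by
  have := List.sizeOf_lt_of_mem c.2
  simp only [LTree.node.sizeOf_spec]
  omega

/-- The number of node constructors occurring in the tree. -/
def numNodes : LTree α → ℕ
  | leaf _ => 0
  | node _ cs => 1 + (cs.attach.map (fun c => numNodes c.1)).sum
decreasing_by
  have := List.sizeOf_lt_of_mem c.2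
  simp only [LTree.node.sizeOf_spec]
  omega

/-- The number of leaf constructors occurring in the tree. -/
def numLeaves : LTree α → ℕ
  | leaf _ => 1
  | node _ cs => (cs.attach.map (fun c => numLeaves c.1)).sum
decreasing_by
  have := List.sizeOf_lt_of_mem c.2
  simp only [LTree.node.sizeOf_spec]
  omega

/-- The local degree constraint: at every node with label `a` and children
`c₁, …, c_n`, one has `a - (rootLabel c₁ + ⋯ + rootLabel c_n) = 2 - n`.
This is the rigidity (virtual dimension zero) condition for each disk
component of a nodal configuration. -/
def LocalDeg : LTree ℤ → Prop
  | leaf _ => True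
  | node a cs =>
      (a - (cs.map rootLabel).sum = 2 - (cs.length : ℤ)) ∧ ∀ c ∈ cs, LocalDeg c

end LTree

/-!
Summing the local constraint over all nodes gives the invariant
`rootLabel t + numLeaves t = leafSum t + numNodes t + 1`: at a node with `n` children the term
`2 - n` is offset by the `+ 1` that each of the `n` subtrees carries, leaving a net contribution
of `1` per node. Against the global constraint this forces `numNodes t = 1`.
-/

namespace LTree

variable {α : Type*}

theorem leafSum_node [AddCommMonoid α] (a : α) (cs : List (LTree α)) :
    leafSum (node a cs) = (cs.map leafSum).sum := by
  rw [leafSum, List.map_attach_eq_pmap, List.pmap_eq_map]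

theorem numNodes_node (a : α) (cs : List (LTree α)) :
    numNodes (node a cs) = 1 + (cs.map numNodes).sum := by
  rw [numNodes, List.map_attach_eq_pmap, List.pmap_eq_map]

theorem numLeaves_node (a : α) (cs : List (LTree α)) :
    numLeaves (node a cs) = (cs.map numLeaves).sum := by
  rw [numLeaves, List.map_attach_eq_pmap, List.pmap_eq_map]

theorem numNodes_eq_zero_iff {t : LTree α} : t.numNodes = 0 ↔ ∃ x, t = leaf x := by
  cases t with
  | leaf x => simp [numNodes]
  | node a cs => simp [numNodes_node]

theorem numNodes_eq_one_iff {t : LTree α} :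
    t.numNodes = 1 ↔ ∃ a cs, t = node a cs ∧ ∀ c ∈ cs, ∃ x, c = leaf x := by
  cases t with
  | leaf x => simp [numNodes]
  | node a cs => simp [numNodes_node, List.sum_eq_zero_iff, numNodes_eq_zero_iff]

theorem LocalDeg.rootLabel_add_numLeaves : ∀ {t : LTree ℤ}, t.LocalDeg →
    t.rootLabel + t.numLeaves = t.leafSum + t.numNodes + 1
  | leaf a, _ => by simp [rootLabel, leafSum, numNodes, numLeaves]
  | node a cs, h => by
    rw [LocalDeg] at h
    obtain ⟨hroot, hcs⟩ := h
    have hchildren : (cs.map fun c => c.rootLabel + (c.numLeaves : ℤ)).sum =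
        (cs.map fun c => c.leafSum + (c.numNodes : ℤ) + 1).sum :=
      congrArg List.sum (List.map_congr_left fun c hc => (hcs c hc).rootLabel_add_numLeaves)
    simp only [List.sum_map_add, List.map_const', List.sum_replicate, nsmul_eq_mul,
      mul_one] at hchildren
    rw [rootLabel, leafSum_node, numNodes_node, numLeaves_node]
    push_cast [Nat.cast_list_sum, List.map_map, Function.comp_def]
    linarith

end LTree

/-- Let `t` be a labeled rooted tree over `ℤ` satisfying the local degree
constraint. If moreover the global degree constraint
`rootLabel t − leafSum t = 2 − numLeaves t` holds, then `numNodes t = 1`,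
i.e. `t` consists of a single node all of whose children are leaves. -/
theorem single_disk_of_degree_constraints (t : LTree ℤ) (h : t.LocalDeg)
    (hglob : t.rootLabel - t.leafSum = 2 - (t.numLeaves : ℤ)) :
    t.numNodes = 1 ∧
      ∃ (a : ℤ) (cs : List (LTree ℤ)),
        t = LTree.node a cs ∧ ∀ c ∈ cs, ∃ x : ℤ, c = LTree.leaf x := by
  have hnodes : t.numNodes = 1 := by
    have hinv := h.rootLabel_add_numLeaves
    omega
  exact ⟨hnodes, LTree.numNodes_eq_one_iff.mp hnodes⟩
end

section
/- Let k be a commutative ring, A an associative unital k-algebra, d : A → A a k-linear map satisfying d(u·v) = d(u)·v + u·d(v) for all u, v ∈ A, and ε : A → k a k-algebra homomorphism. Let a, a′, b, c, α ∈ A and let (β_l)_{l∈L}, (b_l)_{l∈L}, (w_l)_{l∈L}, (c_l)_{l∈L} be families indexed by a finite set L such that d(b) = α·a′ + Σ_{l∈L} β_l·b_l + a·c + Σ_{l∈L} w_l·c_l. Assume d(d(b)) = 0, d(a′) = 0, d(a) = 0, ε(a) = 1, ε(d(α)) = 0, and for every l ∈ L: ε(d(β_l)) = 0, ε(d(b_l))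 = 0, ε(d(w_l)) = 0, and ε(d(c_l)) = 0. Then ε(d(c)) = 0. -/
/-! Applying `ε` to `d (d b) = 0` and expanding with the Leibniz rule, every summand of `d b`
other than `a * c` is killed: `x ↦ ε (d x)` is an `ε`-twisted derivation, so the elements on
which it vanishes form a subalgebra, and that subalgebra contains every factor except `c`.
What is left is `ε (d (a * c)) = ε (d a) * ε c + ε a * ε (d c) = ε (d c)`. -/

namespace LinearMap

variable {k A : Type*} [CommRing k] [Ring A] [Algebra k A]

theorem map_one_eq_zero_of_leibniz (d : A →ₗ[k] A)
    (hleib : ∀ u v : A, d (u * v) = d u * v + u * d v) : d 1 = 0 := by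
  simpa using hleib 1 1

theorem algHom_map_leibniz_mul (d : A →ₗ[k] A)
    (hleib : ∀ u v : A, d (u * v) = d u * v + u * d v) (ε : A →ₐ[k] k) (u v : A) :
    ε (d (u * v)) = ε (d u) * ε v + ε u * ε (d v) := by
  rw [hleib, map_add, map_mul, map_mul]

def kerCompSubalgebra (d : A →ₗ[k] A)
    (hleib : ∀ u v : A, d (u * v) = d u * v + u * d v) (ε : A →ₐ[k] k) : Subalgebra k A where
  carrier := {x | ε (d x) = 0}
  mul_mem' {u v} (hu : ε (d u) = 0) (hv : ε (d v) = 0) := by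
    change ε (d (u * v)) = 0
    rw [algHom_map_leibniz_mul d hleib, hu, hv, zero_mul, mul_zero, add_zero]
  add_mem' {u v} (hu : ε (d u) = 0) (hv : ε (d v) = 0) := by
    change ε (d (u + v)) = 0
    rw [map_add, map_add, hu, hv, add_zero]
  algebraMap_mem' r := by
    simp [Algebra.algebraMap_eq_smul_one, map_one_eq_zero_of_leibniz d hleib]

@[simp]
theorem mem_kerCompSubalgebra {d : A →ₗ[k] A}
    {hleib : ∀ u v : A, d (u * v) = d u * v + u * d v} {ε : A →ₐ[k] k} {x : A} :
    x ∈ kerCompSubalgebra d hleib ε ↔ ε (d x) = 0 :=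
  Iff.rfl

end LinearMap

/-- Let `k` be a commutative ring, `A` an associative unital `k`-algebra,
`d : A → A` a `k`-linear map satisfying the Leibniz rule
`d (u * v) = d u * v + u * d v`, and `ε : A → k` a `k`-algebra homomorphism.
Let `a, a', b, c, α ∈ A` and let `(β_l)`, `(b_l)`, `(w_l)`, `(c_l)` be
families indexed by a finite set `L` such that
`d b = α * a' + Σ_l β_l * b_l + a * c + Σ_l w_l * c_l`.
Assume `d (d b) = 0`, `d a' = 0`, `d a = 0`, `ε a = 1`, `ε (d α) = 0`, and for
every `l ∈ L`: `ε (d (β_l)) = 0`, `ε (d (b_l)) = 0`, `ε (d (w_l)) = 0`, and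
`ε (d (c_l)) = 0`. Then `ε (d c) = 0`.

This is the inductive step in the verification that the recursively defined
map is an augmentation in the proof of the generation theorem. -/
theorem augmentation_inductive_step
    {k A : Type*} [CommRing k] [Ring A] [Algebra k A]
    (d : A →ₗ[k] A)
    (hleib : ∀ u v : A, d (u * v) = d u * v + u * d v)
    (ε : A →ₐ[k] k)
    {L : Type*} [Fintype L]
    (a a' b c α : A) (β bfam w cfam : L → A)
    (hdb : d b = α * a' + (∑ l : L, β l * bfam l) + a * c + ∑ l : L, w l * cfam l)
    (hddb : d (d b) = 0)
    (hda' : d a' = 0) (hda : d a = 0) (hεa : ε a = 1)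
    (hεdα : ε (d α) = 0)
    (hεdβ : ∀ l : L, ε (d (β l)) = 0)
    (hεdb : ∀ l : L, ε (d (bfam l)) = 0)
    (hεdw : ∀ l : L, ε (d (w l)) = 0)
    (hεdc : ∀ l : L, ε (d (cfam l)) = 0) :
    ε (d c) = 0 := by
  set S := LinearMap.kerCompSubalgebra d hleib ε
  have hαa' : α * a' ∈ S := mul_mem hεdα (by simp [S, hda'])
  have hβb : ∑ l, β l * bfam l ∈ S := sum_mem fun l _ => mul_mem (hεdβ l) (hεdb l)
  have hwc : ∑ l, w l * cfam l ∈ S := sum_mem fun l _ => mul_mem (hεdw l) (hεdc l)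
  have hdb_mem : d b ∈ S := by simp [S, hddb]
  have hac : a * c ∈ S := by
    convert sub_mem (sub_mem (sub_mem hdb_mem hαa') hβb) hwc using 1
    rw [hdb]
    abel
  simpa [S, LinearMap.algHom_map_leibniz_mul d hleib, hda, hεa] using hac
end
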